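/- arXiv:1606.07208 — 5 statements merged into one kernel-verified Lean document; each statement's English description precedes it below -/
import Mathlib

section
/- Let P be a dynamic path instance, let x ∈ (x_0, x_n] be a sink location, and let r be the largest index with x_r < x. Let P' be the dynamic path instance obtained from P by replacing each capacity c_t for 1 ≤ t ≤ r+1 by c'_t = min_{t ≤ j ≤ r+1} c_j and leaving all other data unchanged. Then Θ_L(P', x) = Θ_L(P, x). -/
/-!
Every edge that the left evacuation time to `y` ever looks at lies in the block `1, …, r + 1`
of edges to the left of the sink, and it only ever takes minima of capacities over suffixes
`[i + 1, r + 1]` of that block. Replacing each capacity `c_t` of the block by its suffix minimum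
`min_{t ≤ j ≤ r + 1} c_j` does not change any such suffix minimum, hence does not change `Θ_L`.
-/

/-- A dynamic path instance: `n+1` vertices at strictly increasing coordinates
`x 0 < x 1 < ⋯ < x n`, natural-number weights `w i`, positive integer capacities
`c j` (capacity of the edge from `x (j-1)` to `x j`, for `1 ≤ j ≤ n`), and a
positive travel time `τ` per unit distance. -/
structure DPath where
  n : ℕ
  x : ℕ → ℝ
  w : ℕ → ℕ
  c : ℕ → ℕ
  τ : ℝ
  hx : ∀ i, i < n → x i < x (i + 1)
  hc : ∀ j, 1 ≤ j → j ≤ n → 0 < c j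
  hτ : 0 < τ

/-- `P.W a i = w_a + ⋯ + w_i`. -/
def DPath.W (P : DPath) (a i : ℕ) : ℕ := ∑ j ∈ Finset.Icc a i, P.w j

/-- For a sink at `y` in subpath `P_{a,b}`: the minimum capacity
`min_{i+1 ≤ j ≤ k+1} c_j`, where `k` is the index with `x_k < y ≤ x_{k+1}`;
the edges `j` with `i+1 ≤ j ≤ k+1` are exactly those with `i+1 ≤ j ≤ b` and
`x (j-1) < y`. -/
noncomputable def DPath.cL (P : DPath) (b : ℕ) (y : ℝ) (i : ℕ) : ℕ :=
  sInf (P.c '' {j | i + 1 ≤ j ∧ j ≤ b ∧ P.x (j - 1) < y})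

/-- For a sink at `y` in subpath `P_{a,b}`: the minimum capacity
`min_{k+1 ≤ j ≤ i} c_j`, where `k` is the index with `x_k ≤ y < x_{k+1}`;
the edges `j` with `k+1 ≤ j ≤ i` are exactly those with `a+1 ≤ j ≤ i` and
`y < x j`. -/
noncomputable def DPath.cR (P : DPath) (a : ℕ) (y : ℝ) (i : ℕ) : ℕ :=
  sInf (P.c '' {j | a + 1 ≤ j ∧ j ≤ i ∧ y < P.x j})

/-- Left evacuation time `Θ_L(P_{a,b}, y)`: the maximum, over indices `i` with
`a ≤ i ≤ b`, `x i < y` and `W_{a,i} ≥ 1`, of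
`(y − x_i)·τ + ⌈W_{a,i} / min_{i+1 ≤ j ≤ k+1} c_j⌉ − 1`; it is `0` if no such
index exists. -/
noncomputable def ThetaL (P : DPath) (a b : ℕ) (y : ℝ) : ℝ :=
  sSup (insert 0 {t : ℝ | ∃ i, a ≤ i ∧ i ≤ b ∧ P.x i < y ∧ 1 ≤ P.W a i ∧
    t = (y - P.x i) * P.τ + (⌈(P.W a i : ℝ) / (P.cL b y i : ℝ)⌉ : ℝ) - 1})

/-- Right evacuation time `Θ_R(P_{a,b}, y)`. -/
noncomputable def ThetaR (P : DPath) (a b : ℕ) (y : ℝ) : ℝ :=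
  sSup (insert 0 {t : ℝ | ∃ i, a ≤ i ∧ i ≤ b ∧ y < P.x i ∧ 1 ≤ P.W i b ∧
    t = (P.x i - y) * P.τ + (⌈(P.W i b : ℝ) / (P.cR a y i : ℝ)⌉ : ℝ) - 1})

/-- Evacuation time of subpath `P_{a,b}` to sink `y`. -/
noncomputable def Theta (P : DPath) (a b : ℕ) (y : ℝ) : ℝ :=
  max (ThetaL P a b y) (ThetaR P a b y)

/-- `Θ¹(P_{a,b})`: minimum 1-sink evacuation time of subpath `P_{a,b}`
over sinks `y ∈ [x_a, x_b]`. -/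
noncomputable def Theta1 (P : DPath) (a b : ℕ) : ℝ :=
  sInf (Theta P a b '' Set.Icc (P.x a) (P.x b))

/-- `Θᵏ(P_{a,b})`: minimum over all partitions of `{a, …, b}` into at most `k`
nonempty intervals `[f j, f (j+1) - 1]`, of the maximum over the intervals of
`Θ¹`. -/
noncomputable def ThetaK (P : DPath) (k a b : ℕ) : ℝ :=
  sInf {t : ℝ | ∃ (m : ℕ) (f : ℕ → ℕ), 1 ≤ m ∧ m ≤ k ∧
    f 0 = a ∧ f m = b + 1 ∧ (∀ j, j < m → f j < f (j + 1)) ∧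
    t = ⨆ j : Fin m, Theta1 P (f j.val) (f (j.val + 1) - 1)}

open Set

lemma DPath.strictMonoOn_x (P : DPath) : StrictMonoOn P.x (Iic P.n) :=
  strictMonoOn_Iic_of_lt_succ P.hx

lemma Nat.sInf_image_sInf_image_Icc (f : ℕ → ℕ) (a b : ℕ) :
    sInf ((fun t => sInf (f '' Icc t b)) '' Icc a b) = sInf (f '' Icc a b) := by
  rcases lt_or_ge b a with hba | hab
  · simp [Icc_eq_empty_of_lt hba]
  apply le_antisymm
  · exact Nat.sInf_le ⟨a, left_mem_Icc.2 hab, rfl⟩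
  · refine le_csInf ⟨_, a, left_mem_Icc.2 hab, rfl⟩ ?_
    rintro _ ⟨t, ht, rfl⟩
    exact csInf_le_csInf (OrderBot.bddBelow _) ((nonempty_Icc.2 ht.2).image f)
      (image_mono (Icc_subset_Icc_left ht.1))

lemma DPath.cL_eq_sInf_Icc (P : DPath) {y : ℝ} {r : ℕ} (hrn : r < P.n) (hrlt : P.x r < y)
    (hrmax : ∀ i, i ≤ P.n → P.x i < y → i ≤ r) (i : ℕ) :
    P.cL P.n y i = sInf (P.c '' Icc (i + 1) (r + 1)) := by
  have hedges : {j | i + 1 ≤ j ∧ j ≤ P.n ∧ P.x (j - 1) < y} = Icc (i + 1) (r + 1) := by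
    ext j
    simp only [mem_ofPred_eq, mem_Icc]
    constructor
    · rintro ⟨hij, hjn, hjy⟩
      have := hrmax (j - 1) (by omega) hjy
      omega
    · rintro ⟨hij, hjr⟩
      refine ⟨hij, by omega, lt_of_le_of_lt ?_ hrlt⟩
      exact P.strictMonoOn_x.monotoneOn (mem_Iic.2 (by omega)) (mem_Iic.2 hrn.le) (by omega)
  rw [DPath.cL, hedges]

lemma ThetaL_congr {P Q : DPath} {a b : ℕ} {y : ℝ} (hx : Q.x = P.x) (hw : Q.w = P.w)
    (hτ : Q.τ = P.τ) (hcL : ∀ i, i ≤ b → P.x i < y → Q.cL b y i = P.cL b y i) :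
    ThetaL Q a b y = ThetaL P a b y := by
  have hW : Q.W = P.W := by
    ext a i
    simp only [DPath.W, hw]
  unfold ThetaL
  congr 2
  ext t
  simp only [mem_ofPred_eq, hx, hτ, hW]
  refine exists_congr fun i => and_congr_right fun _ => and_congr_right fun hib =>
    and_congr_right fun hiy => ?_
  rw [hcL i hib hiy]

theorem stmt0_general (P P' : DPath) (y : ℝ) (r : ℕ)
    (hyn : y ≤ P.x P.n)
    (hr : r ≤ P.n) (hrlt : P.x r < y)
    (hrmax : ∀ i, i ≤ P.n → P.x i < y → i ≤ r)
    (hn : P'.n = P.n) (hx : P'.x = P.x) (hw : P'.w = P.w) (hτ : P'.τ = P.τ)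
    (hc1 : ∀ t, 1 ≤ t → t ≤ r + 1 →
      P'.c t = sInf (P.c '' {j | t ≤ j ∧ j ≤ r + 1})) :
    ThetaL P' 0 P'.n y = ThetaL P 0 P.n y := by
  have hrn : r < P.n := hr.lt_of_ne fun h => (h ▸ hrlt).not_ge hyn
  have hP' := P'.cL_eq_sInf_Icc (hn ▸ hrn) (hx ▸ hrlt) (by rwa [hn, hx])
  rw [hn]
  refine ThetaL_congr hx hw hτ fun i _ _ => ?_
  rw [← hn, hP', hn, P.cL_eq_sInf_Icc hrn hrlt hrmax,
    image_congr fun t ht => hc1 t (le_add_self.trans ht.1) ht.2]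
  exact Nat.sInf_image_sInf_image_Icc P.c (i + 1) (r + 1)

/-- If `P'` is obtained from `P` by replacing each capacity `c_t`,
for `1 ≤ t ≤ r+1`, by `min_{t ≤ j ≤ r+1} c_j` (where `x_r` is the rightmost
vertex strictly to the left of the sink `y`), then the left evacuation time to
`y` is unchanged. -/
theorem stmt0 (P P' : DPath) (y : ℝ) (r : ℕ)
    (hy0 : P.x 0 < y) (hyn : y ≤ P.x P.n)
    (hr : r ≤ P.n) (hrlt : P.x r < y)
    (hrmax : ∀ i, i ≤ P.n → P.x i < y → i ≤ r)
    (hn : P'.n = P.n) (hx : P'.x = P.x) (hw : P'.w = P.w) (hτ : P'.τ = P.τ)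
    (hc1 : ∀ t, 1 ≤ t → t ≤ r + 1 →
      P'.c t = sInf (P.c '' {j | t ≤ j ∧ j ≤ r + 1}))
    (hc2 : ∀ t, r + 1 < t → P'.c t = P.c t) :
    ThetaL P' 0 P'.n y = ThetaL P 0 P.n y :=
  stmt0_general P P' y r hyn hr hrlt hrmax hn hx hw hτ hc1
end

section
/- Let P be a dynamic path instance with n ≥ 1 and w_0 ≥ 1. Then for every index i with 0 ≤ i < n and every x with x_i < x ≤ x_{i+1}, Θ_L(P,x) = Θ_L(P,x_{i+1}) − τ·(x_{i+1} − x). In particular, Θ_L(P,·) is affine with slope τ on each half-open interval (x_i, x_{i+1}] and is left-continuous at every point of (x_0, x_n]. -/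
/-! On `(x_i, x_{i+1}]` the vertices left of the sink are always `a, …, i` and the bottleneck
capacities `cL` do not change, so every term of the maximum defining `Θ_L(y)` is its value at
`x_{i+1}` minus the same `τ·(x_{i+1} − y)`. Since `w_a ≥ 1`, vertex `a` contributes a positive
term, so the default value `0` of `Θ_L` never wins and the maximum shifts with its terms.
Left-continuity follows because `Θ_L` is affine on `(x_i, y]`. -/

namespace DPath

variable (P : DPath)

lemma x_strictMonoOn : StrictMonoOn P.x (Set.Iic P.n) :=
  strictMonoOn_Iic_of_lt_succ fun m hm => by simpa using P.hx m hm

variable {P}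

lemma x_lt_iff_le {i j : ℕ} {y : ℝ} (hi : i < P.n) (hy : y ∈ Set.Ioc (P.x i) (P.x (i + 1)))
    (hj : j ≤ P.n) : P.x j < y ↔ j ≤ i := by
  refine ⟨fun hjy => ?_, fun hji => ?_⟩
  · by_contra! hij
    have := P.x_strictMonoOn.monotoneOn (Set.mem_Iic.2 hi) (Set.mem_Iic.2 hj) hij
    linarith [hy.2]
  · exact (P.x_strictMonoOn.monotoneOn hj (Set.mem_Iic.2 hi.le) hji).trans_lt hy.1

lemma x_lt_iff_of_mem_Ioc {i j : ℕ} {y : ℝ} (hi : i < P.n)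
    (hy : y ∈ Set.Ioc (P.x i) (P.x (i + 1))) (hj : j ≤ P.n) :
    P.x j < y ↔ P.x j < P.x (i + 1) := by
  rw [x_lt_iff_le hi hy hj, x_lt_iff_le hi ⟨P.hx i hi, le_rfl⟩ hj]

lemma cL_eq_of_mem_Ioc {b i : ℕ} {y : ℝ} (hb : b ≤ P.n) (hi : i < P.n)
    (hy : y ∈ Set.Ioc (P.x i) (P.x (i + 1))) (j : ℕ) :
    P.cL b y j = P.cL b (P.x (i + 1)) j := by
  unfold cL
  congr 2
  ext k
  simp only [Set.mem_ofPred_eq]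
  exact and_congr_right fun _ => and_congr_right fun hkb =>
    x_lt_iff_of_mem_Ioc hi hy (by omega)

lemma cL_pos {b i : ℕ} {y : ℝ} (hib : i < b) (hb : b ≤ P.n) (hy : P.x i < y) :
    0 < P.cL b y i := by
  have hne : (P.c '' {j | i + 1 ≤ j ∧ j ≤ b ∧ P.x (j - 1) < y}).Nonempty :=
    ⟨_, Set.mem_image_of_mem _ (show i + 1 ∈ _ from ⟨le_rfl, hib, by simpa using hy⟩)⟩
  obtain ⟨j, ⟨hij, hjb, -⟩, hj⟩ := Nat.sInf_mem hne
  rw [cL, ← hj]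
  exact P.hc j (by omega) (hjb.trans hb)

end DPath

def leftIndices (P : DPath) (a b : ℕ) (y : ℝ) : Set ℕ :=
  {i | a ≤ i ∧ i ≤ b ∧ P.x i < y ∧ 1 ≤ P.W a i}

noncomputable def leftTime (P : DPath) (a b : ℕ) (y : ℝ) (i : ℕ) : ℝ :=
  (y - P.x i) * P.τ + (⌈(P.W a i : ℝ) / (P.cL b y i : ℝ)⌉ : ℝ) - 1

section LeftEvacuation

variable {P : DPath} {a b i : ℕ} {y : ℝ}

lemma ThetaL_eq_sSup_insert_image (P : DPath) (a b : ℕ) (y : ℝ) :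
    ThetaL P a b y = sSup (insert 0 (leftTime P a b y '' leftIndices P a b y)) := by
  unfold ThetaL
  congr 2
  ext t
  simp only [leftTime, leftIndices, Set.mem_ofPred_eq, Set.mem_image, and_assoc, eq_comm]

lemma bddAbove_leftTime_image (P : DPath) (a b : ℕ) (y : ℝ) :
    BddAbove (leftTime P a b y '' leftIndices P a b y) :=
  (((Set.finite_Iic b).subset fun _ hi => hi.2.1).image _).bddAbove

lemma self_mem_leftIndices (hab : a ≤ b) (hw : 1 ≤ P.w a) (hy : P.x a < y) :
    a ∈ leftIndices P a b y :=
  ⟨le_rfl, hab, hy, by simpa [DPath.W] using hw⟩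

lemma leftTime_self_pos (hab : a < b) (hb : b ≤ P.n) (hw : 1 ≤ P.w a) (hy : P.x a < y) :
    0 < leftTime P a b y a := by
  have hW : 0 < (P.W a a : ℝ) / P.cL b y a := by
    have : 1 ≤ P.W a a := by simpa [DPath.W] using hw
    have := P.cL_pos hab hb hy
    positivity
  have hceil : (1 : ℝ) ≤ ⌈(P.W a a : ℝ) / P.cL b y a⌉ := by exact_mod_cast Int.ceil_pos.2 hW
  have := mul_pos (sub_pos.2 hy) P.hτ
  unfold leftTime
  linarith

lemma ThetaL_eq_csSup (hab : a < b) (hb : b ≤ P.n) (hw : 1 ≤ P.w a) (hy : P.x a < y) :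
    ThetaL P a b y = sSup (leftTime P a b y '' leftIndices P a b y) := by
  have ha := Set.mem_image_of_mem (leftTime P a b y) (self_mem_leftIndices hab.le hw hy)
  rw [ThetaL_eq_sSup_insert_image, csSup_insert (bddAbove_leftTime_image P a b y) ⟨_, ha⟩]
  exact max_eq_right <| le_csSup_of_le (bddAbove_leftTime_image P a b y) ha
    (leftTime_self_pos hab hb hw hy).le

lemma leftIndices_eq_of_mem_Ioc (hb : b ≤ P.n) (hi : i < P.n)
    (hy : y ∈ Set.Ioc (P.x i) (P.x (i + 1))) :
    leftIndices P a b y = leftIndices P a b (P.x (i + 1)) := by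
  ext j
  simp only [leftIndices, Set.mem_ofPred_eq]
  exact and_congr_right fun _ => and_congr_right fun hjb =>
    and_congr_left fun _ => DPath.x_lt_iff_of_mem_Ioc hi hy (hjb.trans hb)

lemma leftTime_eq_sub_of_mem_Ioc (hb : b ≤ P.n) (hi : i < P.n)
    (hy : y ∈ Set.Ioc (P.x i) (P.x (i + 1))) (j : ℕ) :
    leftTime P a b y j = leftTime P a b (P.x (i + 1)) j - P.τ * (P.x (i + 1) - y) := by
  rw [leftTime, leftTime, DPath.cL_eq_of_mem_Ioc hb hi hy]
  ring

lemma csSup_image_sub_const {ι : Type*} {f : ι → ℝ} {s : Set ι} (hs : s.Nonempty)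
    (hf : BddAbove (f '' s)) (c : ℝ) :
    sSup ((fun j => f j - c) '' s) = sSup (f '' s) - c := by
  rw [← Set.image_image (· - c) f s]
  exact ((OrderIso.addRight (-c)).map_csSup' (hs.image f) hf).symm

theorem ThetaL_eq_sub_of_mem_Ioc (hb : b ≤ P.n) (hw : 1 ≤ P.w a) (hai : a ≤ i) (hib : i < b)
    (hy : y ∈ Set.Ioc (P.x i) (P.x (i + 1))) :
    ThetaL P a b y = ThetaL P a b (P.x (i + 1)) - P.τ * (P.x (i + 1) - y) := by
  have hi : i < P.n := hib.trans_le hb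
  have hxa : P.x a ≤ P.x i :=
    P.x_strictMonoOn.monotoneOn (Set.mem_Iic.2 (hai.trans hi.le)) (Set.mem_Iic.2 hi.le) hai
  have hab : a < b := hai.trans_lt hib
  rw [ThetaL_eq_csSup hab hb hw (hxa.trans_lt hy.1),
    ThetaL_eq_csSup hab hb hw (hxa.trans_lt (P.hx i hi)), leftIndices_eq_of_mem_Ioc hb hi hy,
    funext (leftTime_eq_sub_of_mem_Ioc hb hi hy),
    csSup_image_sub_const ⟨a, self_mem_leftIndices hab.le hw (hxa.trans_lt (P.hx i hi))⟩
      (bddAbove_leftTime_image P a b _)]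

end LeftEvacuation

lemma exists_mem_Ioc_of_lt_of_le (f : ℕ → ℝ) {a b : ℕ} {y : ℝ} (hab : a ≤ b) (ha : f a < y)
    (hb : y ≤ f b) : ∃ i, a ≤ i ∧ i < b ∧ y ∈ Set.Ioc (f i) (f (i + 1)) := by
  induction b, hab using Nat.le_induction with
  | base => exact absurd hb ha.not_ge
  | succ b hab ih =>
    by_cases hyb : y ≤ f b
    · obtain ⟨i, hai, hib, hi⟩ := ih hyb
      exact ⟨i, hai, hib.trans (Nat.lt_succ_self b), hi⟩
    · exact ⟨b, hab, Nat.lt_succ_self b, lt_of_not_ge hyb, hb⟩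

theorem continuousWithinAt_ThetaL_Iic {P : DPath} {a b : ℕ} {y : ℝ} (hb : b ≤ P.n)
    (hw : 1 ≤ P.w a) (hab : a ≤ b) (hy : y ∈ Set.Ioc (P.x a) (P.x b)) :
    ContinuousWithinAt (ThetaL P a b) (Set.Iic y) y := by
  obtain ⟨i, hai, hib, hyi⟩ := exists_mem_Ioc_of_lt_of_le P.x hab hy.1 hy.2
  have hagree : Set.EqOn (ThetaL P a b)
      (fun z => ThetaL P a b (P.x (i + 1)) - P.τ * (P.x (i + 1) - z)) (Set.Ioc (P.x i) y) :=
    fun z hz => ThetaL_eq_sub_of_mem_Ioc hb hw hai hib ⟨hz.1, hz.2.trans hyi.2⟩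
  rw [← continuousWithinAt_Ioc_iff_Iic hyi.1]
  exact (by fun_prop : Continuous _).continuousWithinAt.congr hagree (hagree ⟨hyi.1, le_rfl⟩)

theorem stmt2_general (P : DPath) (hw : 1 ≤ P.w 0) :
    (∀ i, i < P.n → ∀ y, P.x i < y → y ≤ P.x (i + 1) →
      ThetaL P 0 P.n y = ThetaL P 0 P.n (P.x (i + 1)) - P.τ * (P.x (i + 1) - y)) ∧
    (∀ y, P.x 0 < y → y ≤ P.x P.n →
      ContinuousWithinAt (ThetaL P 0 P.n) (Set.Iic y) y) :=
  ⟨fun i hi _ hy₁ hy₂ => ThetaL_eq_sub_of_mem_Ioc le_rfl hw i.zero_le hi ⟨hy₁, hy₂⟩,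
    fun _ hy₁ hy₂ => continuousWithinAt_ThetaL_Iic le_rfl hw P.n.zero_le ⟨hy₁, hy₂⟩⟩

/-- if `n ≥ 1` and `w_0 ≥ 1` then for every `i < n` and every
`x_i < y ≤ x_{i+1}`, `Θ_L(P,y) = Θ_L(P,x_{i+1}) − τ·(x_{i+1} − y)`; in
particular `Θ_L(P,·)` is affine with slope `τ` on each interval `(x_i, x_{i+1}]`
and left-continuous at every point of `(x_0, x_n]`. -/
theorem stmt2 (P : DPath) (hn : 1 ≤ P.n) (hw : 1 ≤ P.w 0) :
    (∀ i, i < P.n → ∀ y, P.x i < y → y ≤ P.x (i + 1) →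
      ThetaL P 0 P.n y = ThetaL P 0 P.n (P.x (i + 1)) - P.τ * (P.x (i + 1) - y)) ∧
    (∀ y, P.x 0 < y → y ≤ P.x P.n →
      ContinuousWithinAt (ThetaL P 0 P.n) (Set.Iic y) y) :=
  stmt2_general P hw
end

section
/- For every dynamic path instance P, the function x ↦ Θ(P,x) attains its infimum on [x_0, x_n]: there exists x* ∈ [x_0, x_n] such that Θ(P,x*) ≤ Θ(P,x) for all x ∈ [x_0, x_n]. -/
/-!
Each of `Θ_L(P, ·)` and `Θ_R(P, ·)` is a finite maximum of terms, one per source vertex `i`.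
The left term is nondecreasing in the sink position `y` (the travel distance grows and the
bottleneck capacity can only drop as more edges are crossed) and left-continuous (the set of
crossed edges is locally constant to the left of `y`); symmetrically the right term is
nonincreasing and right-continuous. Such functions are lower semicontinuous, hence so is `Θ`,
and a lower semicontinuous function attains its minimum on the compact interval `[x_0, x_n]`.
-/

open Set Filter Topology

section OrderTopology

variable {α β : Type*} [LinearOrder α] [TopologicalSpace α]
  [LinearOrder β] [TopologicalSpace β] [OrderClosedTopology β]

theorem Monotone.lowerSemicontinuous_of_continuousWithinAt_Iic {f : α → β} (hf : Monotone f)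
    (hc : ∀ x, ContinuousWithinAt f (Iic x) x) : LowerSemicontinuous f := by
  intro x t ht
  rw [← nhdsLE_sup_nhdsGE]
  exact eventually_sup.2
    ⟨hc x (Ioi_mem_nhds ht), eventually_nhdsWithin_of_forall fun y hy => ht.trans_le (hf hy)⟩

theorem Antitone.lowerSemicontinuous_of_continuousWithinAt_Ici {f : α → β} (hf : Antitone f)
    (hc : ∀ x, ContinuousWithinAt f (Ici x) x) : LowerSemicontinuous f := by
  intro x t ht
  rw [← nhdsLE_sup_nhdsGE]
  exact eventually_sup.2
    ⟨eventually_nhdsWithin_of_forall fun y hy => ht.trans_le (hf hy), hc x (Ioi_mem_nhds ht)⟩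

theorem eventually_nhdsLE_lt_iff [OrderClosedTopology α] (c x : α) :
    ∀ᶠ y in 𝓝[≤] x, c < y ↔ c < x := by
  by_cases h : c < x
  · filter_upwards [mem_nhdsWithin_of_mem_nhds (Ioi_mem_nhds h)] with y hy
    exact iff_of_true hy h
  · filter_upwards [self_mem_nhdsWithin] with y (hy : y ≤ x)
    exact iff_of_false (fun hcy => h (hcy.trans_le hy)) h

theorem eventually_nhdsGE_lt_iff [OrderClosedTopology α] (c x : α) :
    ∀ᶠ y in 𝓝[≥] x, y < c ↔ x < c := by
  by_cases h : x < c
  · filter_upwards [mem_nhdsWithin_of_mem_nhds (Iio_mem_nhds h)] with y hy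
    exact iff_of_true hy h
  · filter_upwards [self_mem_nhdsWithin] with y (hy : x ≤ y)
    exact iff_of_false (fun hyc => h (hy.trans_lt hyc)) h

end OrderTopology

theorem ceil_div_sInf_image_le_of_subset {c : ℕ → ℕ} {s t : Set ℕ} (hst : s ⊆ t)
    (hc : ∀ j ∈ t, 0 < c j) (w : ℕ) :
    ⌈(w : ℝ) / (sInf (c '' s) : ℕ)⌉ ≤ ⌈(w : ℝ) / (sInf (c '' t) : ℕ)⌉ := by
  rcases s.eq_empty_or_nonempty with rfl | hs
  · simp only [image_empty, Nat.sInf_empty, Nat.cast_zero, div_zero, Int.ceil_zero]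
    exact Int.ceil_nonneg (by positivity)
  · have ht_pos : 0 < sInf (c '' t) := by
      obtain ⟨j, hj, hjc⟩ := Nat.sInf_mem ((hs.mono hst).image c)
      exact hjc ▸ hc j hj
    have hle : sInf (c '' t) ≤ sInf (c '' s) :=
      csInf_le_csInf (OrderBot.bddBelow _) (hs.image c) (image_mono hst)
    exact Int.ceil_mono (div_le_div_of_nonneg_left (by positivity) (by exact_mod_cast ht_pos)
      (by exact_mod_cast hle))

theorem sSup_insert_zero_eq_iSup {ι : Type*} (s : Finset ι) (p : ι → Prop) [DecidablePred p]
    (f : ι → ℝ) :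
    sSup (insert 0 {t | ∃ i ∈ s, p i ∧ t = f i}) = ⨆ i : s, if p i then max 0 (f i) else 0 := by
  have hbdd : BddAbove (insert (0 : ℝ) {t | ∃ i ∈ s, p i ∧ t = f i}) :=
    (((s.finite_toSet.image f).subset (by rintro _ ⟨i, hi, -, rfl⟩; exact mem_image_of_mem f hi)
      ).insert 0).bddAbove
  refine le_antisymm (csSup_le (insert_nonempty _ _) ?_) (Real.iSup_le (fun i => ?_) ?_)
  · rintro t (rfl | ⟨i, hi, hp, rfl⟩)
    · exact Real.iSup_nonneg fun i => by split_ifs <;> simp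
    · refine le_ciSup_of_le (Finite.bddAbove_range _) ⟨i, hi⟩ ?_
      simp only [if_pos hp, le_max_right]
  · split_ifs with hp
    · exact max_le (le_csSup hbdd (mem_insert _ _))
        (le_csSup hbdd (mem_insert_of_mem _ ⟨i, i.2, hp, rfl⟩))
    · exact le_csSup hbdd (mem_insert _ _)
  · exact le_csSup hbdd (mem_insert _ _)

namespace DPath

variable (P : DPath)

theorem monotoneOn_x : MonotoneOn P.x (Iic P.n) :=
  (strictMonoOn_Iic_of_lt_succ fun m hm => by simpa using P.hx m hm).monotoneOn

theorem eventually_cL_eq (b i : ℕ) (y₀ : ℝ) : ∀ᶠ y in 𝓝[≤] y₀, P.cL b y i = P.cL b y₀ i := by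
  filter_upwards [(eventually_all_finset (Finset.range (b + 1))).2
    fun j _ => eventually_nhdsLE_lt_iff (P.x (j - 1)) y₀] with y hy
  simp only [cL]
  congr 2
  ext j
  exact and_congr_right fun _ => and_congr_right fun hjb =>
    hy j (Finset.mem_range.2 (by omega))

theorem eventually_cR_eq (a i : ℕ) (y₀ : ℝ) : ∀ᶠ y in 𝓝[≥] y₀, P.cR a y i = P.cR a y₀ i := by
  filter_upwards [(eventually_all_finset (Finset.range (i + 1))).2
    fun j _ => eventually_nhdsGE_lt_iff (P.x j) y₀] with y hy
  simp only [cR]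
  congr 2
  ext j
  exact and_congr_right fun _ => and_congr_right fun hji =>
    hy j (Finset.mem_range.2 (by omega))

-- The `max 0` only matters for `i = b` (resp. `i = a`), where `cL` (resp. `cR`) is the junk
-- value `sInf ∅ = 0`: it keeps the term lower semicontinuous without changing `Θ_L`, `Θ_R`.
noncomputable def thetaLTerm (a b i : ℕ) (y : ℝ) : ℝ :=
  if P.x i < y ∧ 1 ≤ P.W a i then
    max 0 ((y - P.x i) * P.τ + (⌈(P.W a i : ℝ) / (P.cL b y i : ℝ)⌉ : ℝ) - 1)
  else 0

noncomputable def thetaRTerm (a b i : ℕ) (y : ℝ) : ℝ :=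
  if y < P.x i ∧ 1 ≤ P.W i b then
    max 0 ((P.x i - y) * P.τ + (⌈(P.W i b : ℝ) / (P.cR a y i : ℝ)⌉ : ℝ) - 1)
  else 0

theorem thetaL_eq_iSup (a b : ℕ) (y : ℝ) :
    ThetaL P a b y = ⨆ i : Finset.Icc a b, P.thetaLTerm a b i y := by
  rw [ThetaL]
  convert sSup_insert_zero_eq_iSup (Finset.Icc a b) (fun i => P.x i < y ∧ 1 ≤ P.W a i)
    fun i => (y - P.x i) * P.τ + (⌈(P.W a i : ℝ) / (P.cL b y i : ℝ)⌉ : ℝ) - 1 using 3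
  · simp only [Finset.mem_Icc, and_assoc]
  · rfl

theorem thetaR_eq_iSup (a b : ℕ) (y : ℝ) :
    ThetaR P a b y = ⨆ i : Finset.Icc a b, P.thetaRTerm a b i y := by
  rw [ThetaR]
  convert sSup_insert_zero_eq_iSup (Finset.Icc a b) (fun i => y < P.x i ∧ 1 ≤ P.W i b)
    fun i => (P.x i - y) * P.τ + (⌈(P.W i b : ℝ) / (P.cR a y i : ℝ)⌉ : ℝ) - 1 using 3
  · simp only [Finset.mem_Icc, and_assoc]
  · rfl

theorem thetaLTerm_monotone (a : ℕ) {b : ℕ} (i : ℕ) (hb : b ≤ P.n) :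
    Monotone (P.thetaLTerm a b i) := by
  intro y₀ y hy
  have hsub : {j | i + 1 ≤ j ∧ j ≤ b ∧ P.x (j - 1) < y₀} ⊆
      {j | i + 1 ≤ j ∧ j ≤ b ∧ P.x (j - 1) < y} :=
    fun j hj => ⟨hj.1, hj.2.1, hj.2.2.trans_le hy⟩
  have hceil := ceil_div_sInf_image_le_of_subset hsub
    (fun j hj => P.hc j (by have := hj.1; omega) (hj.2.1.trans hb)) (P.W a i)
  have hdist : (y₀ - P.x i) * P.τ ≤ (y - P.x i) * P.τ := by gcongr; exact P.hτ.le
  unfold thetaLTerm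
  split_ifs with h₀ h
  · exact max_le_max le_rfl (by have := Int.cast_le (R := ℝ).2 hceil; unfold cL; linarith)
  · exact absurd ⟨h₀.1.trans_le hy, h₀.2⟩ h
  · exact le_max_left _ _
  · exact le_rfl

theorem thetaRTerm_antitone (a b : ℕ) {i : ℕ} (hi : i ≤ P.n) :
    Antitone (P.thetaRTerm a b i) := by
  intro y y₀ hy
  have hsub : {j | a + 1 ≤ j ∧ j ≤ i ∧ y₀ < P.x j} ⊆
      {j | a + 1 ≤ j ∧ j ≤ i ∧ y < P.x j} :=
    fun j hj => ⟨hj.1, hj.2.1, hy.trans_lt hj.2.2⟩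
  have hceil := ceil_div_sInf_image_le_of_subset hsub
    (fun j hj => P.hc j (by have := hj.1; omega) (hj.2.1.trans hi)) (P.W i b)
  have hdist : (P.x i - y₀) * P.τ ≤ (P.x i - y) * P.τ := by gcongr; exact P.hτ.le
  unfold thetaRTerm
  split_ifs with h₀ h
  · exact max_le_max le_rfl (by have := Int.cast_le (R := ℝ).2 hceil; unfold cR; linarith)
  · exact absurd ⟨hy.trans_lt h₀.1, h₀.2⟩ h
  · exact le_max_left _ _
  · exact le_rfl

theorem thetaLTerm_continuousWithinAt_Iic (a b i : ℕ) (y₀ : ℝ) :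
    ContinuousWithinAt (P.thetaLTerm a b i) (Iic y₀) y₀ := by
  by_cases h : P.x i < y₀ ∧ 1 ≤ P.W a i
  · have hev : P.thetaLTerm a b i =ᶠ[𝓝[≤] y₀] fun y =>
        max 0 ((y - P.x i) * P.τ + (⌈(P.W a i : ℝ) / (P.cL b y₀ i : ℝ)⌉ : ℝ) - 1) := by
      filter_upwards [P.eventually_cL_eq b i y₀, eventually_nhdsLE_lt_iff (P.x i) y₀]
        with y hcL hxy
      rw [thetaLTerm, if_pos ⟨hxy.2 h.1, h.2⟩, hcL]
    refine (Continuous.continuousWithinAt (by fun_prop)).congr_of_eventuallyEq hev ?_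
    rw [thetaLTerm, if_pos h]
  · refine (continuousWithinAt_const (b := (0 : ℝ))).congr_of_mem
      (fun y (hy : y ≤ y₀) => ?_) (mem_Iic.2 le_rfl)
    exact if_neg fun h' => h ⟨h'.1.trans_le hy, h'.2⟩

theorem thetaRTerm_continuousWithinAt_Ici (a b i : ℕ) (y₀ : ℝ) :
    ContinuousWithinAt (P.thetaRTerm a b i) (Ici y₀) y₀ := by
  by_cases h : y₀ < P.x i ∧ 1 ≤ P.W i b
  · have hev : P.thetaRTerm a b i =ᶠ[𝓝[≥] y₀] fun y =>
        max 0 ((P.x i - y) * P.τ + (⌈(P.W i b : ℝ) / (P.cR a y₀ i : ℝ)⌉ : ℝ) - 1) := by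
      filter_upwards [P.eventually_cR_eq a i y₀, eventually_nhdsGE_lt_iff (P.x i) y₀]
        with y hcR hxy
      rw [thetaRTerm, if_pos ⟨hxy.2 h.1, h.2⟩, hcR]
    refine (Continuous.continuousWithinAt (by fun_prop)).congr_of_eventuallyEq hev ?_
    rw [thetaRTerm, if_pos h]
  · refine (continuousWithinAt_const (b := (0 : ℝ))).congr_of_mem
      (fun y (hy : y₀ ≤ y) => ?_) (mem_Ici.2 le_rfl)
    exact if_neg fun h' => h ⟨hy.trans_lt h'.1, h'.2⟩

theorem lowerSemicontinuous_thetaL (a : ℕ) {b : ℕ} (hb : b ≤ P.n) :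
    LowerSemicontinuous (ThetaL P a b) := by
  rw [show ThetaL P a b = _ from funext (P.thetaL_eq_iSup a b)]
  exact lowerSemicontinuous_ciSup (fun _ => Finite.bddAbove_range _) fun i =>
    (P.thetaLTerm_monotone a i hb).lowerSemicontinuous_of_continuousWithinAt_Iic
      (P.thetaLTerm_continuousWithinAt_Iic a b i)

theorem lowerSemicontinuous_thetaR (a : ℕ) {b : ℕ} (hb : b ≤ P.n) :
    LowerSemicontinuous (ThetaR P a b) := by
  rw [show ThetaR P a b = _ from funext (P.thetaR_eq_iSup a b)]
  exact lowerSemicontinuous_ciSup (fun _ => Finite.bddAbove_range _) fun i =>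
    (P.thetaRTerm_antitone a b ((Finset.mem_Icc.1 i.2).2.trans hb)
      ).lowerSemicontinuous_of_continuousWithinAt_Ici (P.thetaRTerm_continuousWithinAt_Ici a b i)

theorem lowerSemicontinuous_theta (a : ℕ) {b : ℕ} (hb : b ≤ P.n) :
    LowerSemicontinuous (Theta P a b) :=
  (P.lowerSemicontinuous_thetaL a hb).sup (P.lowerSemicontinuous_thetaR a hb)

end DPath

/-- `Θ(P,·)` attains its infimum on `[x_0, x_n]`. -/
theorem stmt6 (P : DPath) :
    ∃ xs ∈ Set.Icc (P.x 0) (P.x P.n),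
      ∀ y ∈ Set.Icc (P.x 0) (P.x P.n), Theta P 0 P.n xs ≤ Theta P 0 P.n y := by
  have hx : P.x 0 ≤ P.x P.n := P.monotoneOn_x (Nat.zero_le _) (mem_Iic.2 le_rfl) (Nat.zero_le _)
  obtain ⟨y, hy, hmin⟩ := ((P.lowerSemicontinuous_theta 0 le_rfl).lowerSemicontinuousOn _
    ).exists_isMinOn (nonempty_Icc.2 hx) isCompact_Icc
  exact ⟨y, hy, fun z hz => hmin hz⟩
end

section
/- Let P be a dynamic path instance, let α ≥ 0 be a real number, let 0 ≤ i ≤ n, and let k ≥ 2 be an integer. Let j* = max{ j : i ≤ j ≤ n and Θ¹(P_{i,j}) ≤ α } (this maximum exists since Θ¹(P_{i,i}) = 0 ≤ α). Then Θᵏ(P_{i,n}) ≤ α if and only if either j* = n or Θ^{k−1}(P_{j*+1,n}) ≤ α. -/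
/-!
Removing vertices from the front of a subpath never increases its one-sink evacuation time:
the left time only loses vertices and weight, and moving the sink right, into the shorter
subpath, can only shorten distances and enlarge the bottleneck capacities seen by the
vertices on its right. Hence in any partition of `P_{i,n}` into intervals of cost at most `α`, the first
interval `[i, c - 1]` may be stretched to the maximal feasible interval `[i, j*]`, with the
remaining intervals restricted to `[j* + 1, n]`; conversely a partition of `P_{j*+1,n}` into
`k - 1` intervals is extended by `[i, j*]`.
-/

namespace DPath

variable (P : DPath)

lemma x_le_x {i j : ℕ} (hij : i ≤ j) (hj : j ≤ P.n) : P.x i ≤ P.x j := by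
  induction hij with
  | refl => exact le_rfl
  | @step m _ ih => exact (ih (by omega)).trans (P.hx m (by omega)).le

lemma W_le_W_of_le_left {a a' : ℕ} (h : a ≤ a') (i : ℕ) : P.W a' i ≤ P.W a i :=
  Finset.sum_le_sum_of_subset (Finset.Icc_subset_Icc_left h)

lemma cR_of_le {a i : ℕ} (hi : i ≤ a) (y : ℝ) : P.cR a y i = 0 := by
  have : {j | a + 1 ≤ j ∧ j ≤ i ∧ y < P.x j} = ∅ := by
    ext j; simp only [Set.mem_ofPred_eq, Set.mem_empty_iff_false, iff_false]; omega
  rw [cR, this, Set.image_empty, Nat.sInf_empty]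

lemma cR_le_cR {a a' i : ℕ} {y y' : ℝ} (ha : a ≤ a') (hy : y ≤ y') (hi : a' < i)
    (hxi : y' < P.x i) : P.cR a y i ≤ P.cR a' y' i := by
  obtain ⟨j, ⟨hj₁, hj₂, hj₃⟩, hj⟩ :=
    Nat.sInf_mem (s := P.c '' {j | a' + 1 ≤ j ∧ j ≤ i ∧ y' < P.x j})
    ⟨_, i, ⟨hi, le_rfl, hxi⟩, rfl⟩
  rw [cR, cR, ← hj]
  exact Nat.sInf_le ⟨j, ⟨by omega, hj₂, hy.trans_lt hj₃⟩, rfl⟩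

lemma cR_pos {a i : ℕ} {y : ℝ} (hi : a < i) (hin : i ≤ P.n) (hxi : y < P.x i) :
    0 < P.cR a y i := by
  obtain ⟨j, ⟨hj₁, hj₂, -⟩, hj⟩ :=
    Nat.sInf_mem (s := P.c '' {j | a + 1 ≤ j ∧ j ≤ i ∧ y < P.x j})
    ⟨_, i, ⟨hi, le_rfl, hxi⟩, rfl⟩
  rw [cR, ← hj]
  exact P.hc j (by omega) (by omega)

end DPath

lemma ceil_div_le_ceil_div {W W' c c' : ℕ} (hW : W ≤ W') (hc : 0 < c) (hcc' : c ≤ c') :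
    (⌈(W : ℝ) / c'⌉ : ℝ) ≤ ⌈(W' : ℝ) / c⌉ := by
  refine Int.cast_le.mpr (Int.ceil_le_ceil ?_)
  calc (W : ℝ) / c' ≤ W / c := div_le_div_of_nonneg_left (by positivity) (by exact_mod_cast hc)
        (by exact_mod_cast hcc')
    _ ≤ W' / c := div_le_div_of_nonneg_right (by exact_mod_cast hW) (by positivity)

section EvacuationTime

variable (P : DPath) {a a' b : ℕ} {y y' v : ℝ}

lemma bddAbove_ThetaL_set (a b : ℕ) (y : ℝ) :
    BddAbove (insert (0 : ℝ) {t : ℝ | ∃ i, a ≤ i ∧ i ≤ b ∧ P.x i < y ∧ 1 ≤ P.W a i ∧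
      t = (y - P.x i) * P.τ + (⌈(P.W a i : ℝ) / (P.cL b y i : ℝ)⌉ : ℝ) - 1}) :=
  (((Set.finite_Icc a b).image fun i =>
    (y - P.x i) * P.τ + (⌈(P.W a i : ℝ) / (P.cL b y i : ℝ)⌉ : ℝ) - 1).subset
      (by rintro t ⟨i, h₁, h₂, -, -, rfl⟩; exact ⟨i, ⟨h₁, h₂⟩, rfl⟩)).insert 0 |>.bddAbove

lemma bddAbove_ThetaR_set (a b : ℕ) (y : ℝ) :
    BddAbove (insert (0 : ℝ) {t : ℝ | ∃ i, a ≤ i ∧ i ≤ b ∧ y < P.x i ∧ 1 ≤ P.W i b ∧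
      t = (P.x i - y) * P.τ + (⌈(P.W i b : ℝ) / (P.cR a y i : ℝ)⌉ : ℝ) - 1}) :=
  (((Set.finite_Icc a b).image fun i =>
    (P.x i - y) * P.τ + (⌈(P.W i b : ℝ) / (P.cR a y i : ℝ)⌉ : ℝ) - 1).subset
      (by rintro t ⟨i, h₁, h₂, -, -, rfl⟩; exact ⟨i, ⟨h₁, h₂⟩, rfl⟩)).insert 0 |>.bddAbove

lemma ThetaL_nonneg : 0 ≤ ThetaL P a b y :=
  le_csSup (bddAbove_ThetaL_set P a b y) (Set.mem_insert _ _)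

lemma ThetaR_nonneg : 0 ≤ ThetaR P a b y :=
  le_csSup (bddAbove_ThetaR_set P a b y) (Set.mem_insert _ _)

lemma Theta_nonneg : 0 ≤ Theta P a b y :=
  (ThetaL_nonneg P).trans (le_max_left _ _)

lemma le_ThetaL {i : ℕ} (h₁ : a ≤ i) (h₂ : i ≤ b) (h₃ : P.x i < y) (h₄ : 1 ≤ P.W a i) :
    (y - P.x i) * P.τ + (⌈(P.W a i : ℝ) / (P.cL b y i : ℝ)⌉ : ℝ) - 1 ≤ ThetaL P a b y :=
  le_csSup (bddAbove_ThetaL_set P a b y) (Set.mem_insert_of_mem _ ⟨i, h₁, h₂, h₃, h₄, rfl⟩)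

lemma le_ThetaR {i : ℕ} (h₁ : a ≤ i) (h₂ : i ≤ b) (h₃ : y < P.x i) (h₄ : 1 ≤ P.W i b) :
    (P.x i - y) * P.τ + (⌈(P.W i b : ℝ) / (P.cR a y i : ℝ)⌉ : ℝ) - 1 ≤ ThetaR P a b y :=
  le_csSup (bddAbove_ThetaR_set P a b y) (Set.mem_insert_of_mem _ ⟨i, h₁, h₂, h₃, h₄, rfl⟩)

lemma ThetaL_le (hv : 0 ≤ v) (h : ∀ i, a ≤ i → i ≤ b → P.x i < y → 1 ≤ P.W a i →
      (y - P.x i) * P.τ + (⌈(P.W a i : ℝ) / (P.cL b y i : ℝ)⌉ : ℝ) - 1 ≤ v) :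
    ThetaL P a b y ≤ v := by
  refine csSup_le ⟨0, Set.mem_insert _ _⟩ ?_
  rintro t (rfl | ⟨i, h₁, h₂, h₃, h₄, rfl⟩)
  exacts [hv, h i h₁ h₂ h₃ h₄]

lemma ThetaR_le (hv : 0 ≤ v) (h : ∀ i, a ≤ i → i ≤ b → y < P.x i → 1 ≤ P.W i b →
      (P.x i - y) * P.τ + (⌈(P.W i b : ℝ) / (P.cR a y i : ℝ)⌉ : ℝ) - 1 ≤ v) :
    ThetaR P a b y ≤ v := by
  refine csSup_le ⟨0, Set.mem_insert _ _⟩ ?_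
  rintro t (rfl | ⟨i, h₁, h₂, h₃, h₄, rfl⟩)
  exacts [hv, h i h₁ h₂ h₃ h₄]

lemma ThetaL_eq_zero_of_le (hb : b ≤ P.n) (hy : y ≤ P.x a) : ThetaL P a b y = 0 :=
  (ThetaL_le P le_rfl fun _ h₁ h₂ h₃ _ =>
    absurd (hy.trans (P.x_le_x h₁ (h₂.trans hb))) h₃.not_ge).antisymm (ThetaL_nonneg P)

lemma ThetaL_le_ThetaL_of_le_left (ha : a ≤ a') : ThetaL P a' b y ≤ ThetaL P a b y :=
  ThetaL_le P (ThetaL_nonneg P) fun i h₁ h₂ h₃ h₄ => by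
    have hW := P.W_le_W_of_le_left ha i
    have hle := le_ThetaL P (ha.trans h₁) h₂ h₃ (h₄.trans hW)
    have hceil :
        (⌈(P.W a' i : ℝ) / (P.cL b y i : ℝ)⌉ : ℝ) ≤ ⌈(P.W a i : ℝ) / (P.cL b y i : ℝ)⌉ := by
      gcongr
    linarith

lemma ThetaR_le_ThetaR (ha : a ≤ a') (hy : y ≤ y') (hb : b ≤ P.n) :
    ThetaR P a' b y' ≤ ThetaR P a b y :=
  ThetaR_le P (ThetaR_nonneg P) fun i h₁ h₂ h₃ h₄ => by
    have hle := le_ThetaR P (ha.trans h₁) h₂ (hy.trans_lt h₃) h₄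
    have hdist : (P.x i - y') * P.τ ≤ (P.x i - y) * P.τ := by gcongr; exact P.hτ.le
    have hceil :
        (⌈(P.W i b : ℝ) / (P.cR a' y' i : ℝ)⌉ : ℝ) ≤ ⌈(P.W i b : ℝ) / (P.cR a y i : ℝ)⌉ := by
      rcases h₁.eq_or_lt with rfl | hi
      · rw [P.cR_of_le le_rfl, Nat.cast_zero, div_zero, Int.ceil_zero, Int.cast_zero]
        exact_mod_cast Int.ceil_nonneg (by positivity)
      · exact ceil_div_le_ceil_div le_rfl (P.cR_pos (ha.trans_lt hi) (h₂.trans hb) (hy.trans_lt h₃))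
          (P.cR_le_cR ha hy hi h₃)
    linarith

lemma Theta_le_Theta_of_le_left (ha : a ≤ a') (hb : b ≤ P.n) (y : ℝ) :
    Theta P a' b (max y (P.x a')) ≤ Theta P a b y := by
  refine max_le ?_ ((ThetaR_le_ThetaR P ha (le_max_left _ _) hb).trans (le_max_right _ _))
  rcases le_total (P.x a') y with hy | hy
  · rw [max_eq_left hy]
    exact (ThetaL_le_ThetaL_of_le_left P ha).trans (le_max_left _ _)
  · rw [max_eq_right hy, ThetaL_eq_zero_of_le P hb le_rfl]
    exact Theta_nonneg P

lemma Theta1_le_Theta1_of_le_left (ha : a ≤ a') (hab : a' ≤ b) (hb : b ≤ P.n) :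
    Theta1 P a' b ≤ Theta1 P a b := by
  refine le_csInf ⟨_, Set.mem_image_of_mem _ ⟨le_rfl, P.x_le_x (ha.trans hab) hb⟩⟩ ?_
  rintro _ ⟨y, ⟨-, hy⟩, rfl⟩
  have hmem : max y (P.x a') ∈ Set.Icc (P.x a') (P.x b) :=
    ⟨le_max_right _ _, max_le hy (P.x_le_x hab hb)⟩
  have hbdd : BddBelow (Theta P a' b '' Set.Icc (P.x a') (P.x b)) :=
    ⟨0, by rintro _ ⟨z, -, rfl⟩; exact Theta_nonneg P⟩
  exact (csInf_le hbdd (Set.mem_image_of_mem _ hmem)).trans (Theta_le_Theta_of_le_left P ha hb y)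

end EvacuationTime

lemma monotoneOn_Iic_of_lt_add_one {f : ℕ → ℕ} {m : ℕ} (h : ∀ j, j < m → f j < f (j + 1)) :
    MonotoneOn f (Set.Iic m) :=
  monotoneOn_of_le_succ Set.ordConnected_Iic fun j _ _ hj => by
    rw [Order.succ_eq_add_one] at hj ⊢
    exact (h j hj).le

/-- The witness behind `ThetaK P k a b ≤ α`: a partition of `{a, …, b}` into at most `k`
intervals `[f j, f (j+1) - 1]`, each evacuable within time `α` by a single sink. -/
def HasPartitionWithin (P : DPath) (k a b : ℕ) (α : ℝ) : Prop :=
  ∃ (m : ℕ) (f : ℕ → ℕ), 1 ≤ m ∧ m ≤ k ∧ f 0 = a ∧ f m = b + 1 ∧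
    (∀ j, j < m → f j < f (j + 1)) ∧ ∀ j, j < m → Theta1 P (f j) (f (j + 1) - 1) ≤ α

section Partitions

variable (P : DPath) {k k' a b c : ℕ} {α : ℝ}

lemma hasPartitionWithin_single (hk : 1 ≤ k) (hab : a ≤ b) (h : Theta1 P a b ≤ α) :
    HasPartitionWithin P k a b α :=
  ⟨1, fun | 0 => a | _ + 1 => b + 1, le_rfl, hk, rfl, rfl,
    fun j hj => by obtain rfl : j = 0 := (by omega); exact Nat.lt_succ_of_le hab,
    fun j hj => by obtain rfl : j = 0 := (by omega); simpa using h⟩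

lemma hasPartitionWithin_cons (hac : a < c) (h : Theta1 P a (c - 1) ≤ α)
    (hrest : HasPartitionWithin P k c b α) : HasPartitionWithin P (k + 1) a b α := by
  obtain ⟨m, f, hm, hmk, hf0, hfm, hinc, hθ⟩ := hrest
  refine ⟨m + 1, fun | 0 => a | j + 1 => f j, by omega, by omega, rfl, hfm, ?_, ?_⟩
  · rintro (_ | j) hj
    exacts [show a < f 0 from hf0 ▸ hac, hinc j (by omega)]
  · rintro (_ | j) hj
    exacts [show Theta1 P a (f 0 - 1) ≤ α from hf0 ▸ h, hθ j (by omega)]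

namespace HasPartitionWithin

variable {P}

lemma le (h : HasPartitionWithin P k a b α) : a ≤ b := by
  obtain ⟨m, f, hm, -, hf0, hfm, hinc, -⟩ := h
  have h1m : f 1 ≤ f m :=
    monotoneOn_Iic_of_lt_add_one hinc (Set.mem_Iic.mpr hm) (Set.mem_Iic.mpr le_rfl) hm
  have h01 : f 0 < f 1 := hinc 0 hm
  omega

lemma mono (h : HasPartitionWithin P k a b α) (hk : k ≤ k') : HasPartitionWithin P k' a b α :=
  let ⟨m, f, hm, hmk, rest⟩ := h
  ⟨m, f, hm, hmk.trans hk, rest⟩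

lemma uncons (h : HasPartitionWithin P (k + 1) a b α) :
    ∃ c, a < c ∧ Theta1 P a (c - 1) ≤ α ∧ (c = b + 1 ∨ HasPartitionWithin P k c b α) := by
  obtain ⟨m, f, hm, hmk, hf0, hfm, hinc, hθ⟩ := h
  refine ⟨f 1, hf0 ▸ hinc 0 hm, hf0 ▸ hθ 0 hm, ?_⟩
  obtain rfl | ⟨m, rfl⟩ : m = 1 ∨ ∃ m', m = m' + 2 := by
    rcases m with _ | _ | m <;> simp_all
  · exact .inl hfm
  · exact .inr ⟨m + 1, fun j => f (j + 1), by omega, by omega, rfl, hfm,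
      fun j hj => hinc (j + 1) (by omega), fun j hj => hθ (j + 1) (by omega)⟩

lemma of_le_left (hb : b ≤ P.n) (h : HasPartitionWithin P k a b α) {a' : ℕ} (ha : a ≤ a')
    (hab : a' ≤ b) : HasPartitionWithin P k a' b α := by
  induction k generalizing a with
  | zero => obtain ⟨m, -, hm, hmk, -⟩ := h; omega
  | succ k ih =>
    obtain ⟨c, hac, hθ, hrest⟩ := h.uncons
    by_cases hc : a' < c
    · have hθ' : Theta1 P a' (c - 1) ≤ α := by
        refine (Theta1_le_Theta1_of_le_left P ha ?_ ?_).trans hθ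
        · omega
        · rcases hrest with rfl | hrest
          · omega
          · have := hrest.le; omega
      rcases hrest with rfl | hrest
      · exact hasPartitionWithin_single P (by omega) hab (by simpa using hθ')
      · exact hasPartitionWithin_cons P hc hθ' hrest
    · rcases hrest with rfl | hrest
      · omega
      · exact (ih hrest (by omega)).mono k.le_succ

end HasPartitionWithin

lemma ThetaK_set_finite (k a b : ℕ) :
    {t : ℝ | ∃ (m : ℕ) (f : ℕ → ℕ), 1 ≤ m ∧ m ≤ k ∧
      f 0 = a ∧ f m = b + 1 ∧ (∀ j, j < m → f j < f (j + 1)) ∧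
      t = ⨆ j : Fin m, Theta1 P (f j.val) (f (j.val + 1) - 1)}.Finite := by
  refine (((Set.finite_Iic (b + 1)).prod (Set.finite_Iic (b + 1))).image
    fun p => Theta1 P p.1 (p.2 - 1)).subset ?_
  rintro _ ⟨m, f, hm, -, -, hfm, hinc, rfl⟩
  have : Nonempty (Fin m) := ⟨⟨0, hm⟩⟩
  obtain ⟨j, hj⟩ := exists_eq_ciSup_of_finite
    (f := fun j : Fin m => Theta1 P (f j.val) (f (j.val + 1) - 1))
  have hf := monotoneOn_Iic_of_lt_add_one hinc
  have hle : ∀ i, i ≤ m → f i ≤ b + 1 := fun i hi =>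
    hfm ▸ hf (Set.mem_Iic.mpr hi) (Set.mem_Iic.mpr le_rfl) hi
  exact ⟨(f j, f (j + 1)), ⟨hle j j.isLt.le, hle (j + 1) j.isLt⟩, hj⟩

lemma ThetaK_le_iff (hk : 1 ≤ k) (hab : a ≤ b) :
    ThetaK P k a b ≤ α ↔ HasPartitionWithin P k a b α := by
  unfold ThetaK
  constructor
  · intro h
    obtain ⟨m, f, hm, hmk, hf0, hfm, hinc, -⟩ := hasPartitionWithin_single P hk hab le_rfl
    obtain ⟨m, f, hm, hmk, hf0, hfm, hinc, hval⟩ := Set.Nonempty.csInf_mem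
      (by exact ⟨_, m, f, hm, hmk, hf0, hfm, hinc, rfl⟩) (ThetaK_set_finite P k a b)
    refine ⟨m, f, hm, hmk, hf0, hfm, hinc, fun j hj => ?_⟩
    exact (le_ciSup (Set.finite_range _).bddAbove (⟨j, hj⟩ : Fin m)).trans (hval ▸ h)
  · rintro ⟨m, f, hm, hmk, hf0, hfm, hinc, hθ⟩
    have : Nonempty (Fin m) := ⟨⟨0, hm⟩⟩
    exact (csInf_le (ThetaK_set_finite P k a b).bddBelow ⟨m, f, hm, hmk, hf0, hfm, hinc, rfl⟩).trans
      (ciSup_le fun j => hθ j j.isLt)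

/-- Greedy step: the first interval may as well be the longest one, `[a, js]`. -/
lemma hasPartitionWithin_succ_iff (hb : b ≤ P.n) {js : ℕ}
    (hjs : a ≤ js ∧ js ≤ b ∧ Theta1 P a js ≤ α)
    (hjsmax : ∀ j, a ≤ j → j ≤ b → Theta1 P a j ≤ α → j ≤ js) :
    HasPartitionWithin P (k + 1) a b α ↔ js = b ∨ HasPartitionWithin P k (js + 1) b α := by
  obtain ⟨hajs, hjsb, hθ⟩ := hjs
  constructor
  · intro h
    obtain ⟨c, hac, hθc, hrest⟩ := h.uncons
    rcases hrest with rfl | hrest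
    · exact .inl (by have := hjsmax b (by omega) le_rfl (by simpa using hθc); omega)
    · have hcjs : c - 1 ≤ js := hjsmax _ (by omega) (by have := hrest.le; omega) hθc
      rcases hjsb.eq_or_lt with hjsb | hjsb
      · exact .inl hjsb
      · exact .inr (hrest.of_le_left hb (by omega) hjsb)
  · rintro (rfl | h)
    · exact hasPartitionWithin_single P (by omega) hajs hθ
    · exact hasPartitionWithin_cons P (by omega) (by simpa using hθ) h

end Partitions

theorem stmt12_general (P : DPath) (α : ℝ) (i : ℕ)
    (k : ℕ) (hk : 2 ≤ k) (js : ℕ)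
    (hjs : i ≤ js ∧ js ≤ P.n ∧ Theta1 P i js ≤ α)
    (hjsmax : ∀ j, i ≤ j → j ≤ P.n → Theta1 P i j ≤ α → j ≤ js) :
    ThetaK P k i P.n ≤ α ↔ (js = P.n ∨ ThetaK P (k - 1) (js + 1) P.n ≤ α) := by
  obtain ⟨k, rfl⟩ : ∃ k', k = k' + 1 := ⟨k - 1, by omega⟩
  rw [ThetaK_le_iff P (by omega) (hjs.1.trans hjs.2.1),
    hasPartitionWithin_succ_iff P le_rfl hjs hjsmax, Nat.add_sub_cancel]
  exact or_congr_right' fun hjsn => (ThetaK_le_iff P (by omega) (by omega)).symm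

/-- with `j* = max { j : i ≤ j ≤ n, Θ¹(P_{i,j}) ≤ α }`, one has
`Θᵏ(P_{i,n}) ≤ α` iff `j* = n` or `Θ^{k−1}(P_{j*+1,n}) ≤ α`. -/
theorem stmt12 (P : DPath) (α : ℝ) (hα : 0 ≤ α) (i : ℕ) (hi : i ≤ P.n)
    (k : ℕ) (hk : 2 ≤ k) (js : ℕ)
    (hjs : i ≤ js ∧ js ≤ P.n ∧ Theta1 P i js ≤ α)
    (hjsmax : ∀ j, i ≤ j → j ≤ P.n → Theta1 P i j ≤ α → j ≤ js) :
    ThetaK P k i P.n ≤ α ↔ (js = P.n ∨ ThetaK P (k - 1) (js + 1) P.n ≤ α) :=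
  stmt12_general P α i k hk js hjs hjsmax
end

section
/- Let P be a dynamic path instance, let α ≥ 0 be a real number, and let 0 ≤ i ≤ n. The set { x ∈ [x_i, x_n] : Θ_L(P_{i,n}, x) ≤ α } contains x_i and has a maximum element; call it x*. Assume the set J = { j : i ≤ j ≤ n, x* ≤ x_j, and Θ_R(P_{i,j}, x*) ≤ α } is nonempty, and let j* = max J. Then j* = max{ j : i ≤ j ≤ n and Θ¹(P_{i,j}) ≤ α }, and moreover Θ(P_{i,j*}, x*) ≤ α. -/
open Set Filter Topology

theorem lowerSemicontinuousWithinAt_of_eventually_sub_mul_dist_le {X : Type*}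
    [PseudoMetricSpace X] {f : X → ℝ} {s : Set X} {x : X} {C : ℝ}
    (h : ∀ᶠ x' in 𝓝[s] x, f x - C * dist x' x ≤ f x') :
    LowerSemicontinuousWithinAt f s x := by
  intro t ht
  have hlim : Tendsto (fun x' => f x - C * dist x' x) (𝓝[s] x) (𝓝 (f x)) := by
    have : Continuous (fun x' => f x - C * dist x' x) := by fun_prop
    simpa using (this.tendsto x).mono_left nhdsWithin_le_nhds
  filter_upwards [h, hlim.eventually (lt_mem_nhds ht)] with x' h1 h2 using h2.trans_le h1

theorem bddAbove_insert_exists_Icc (c : ℝ) (a b : ℕ) (p q : ℕ → Prop) (f : ℕ → ℝ) :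
    BddAbove (insert c {t | ∃ k, a ≤ k ∧ k ≤ b ∧ p k ∧ q k ∧ t = f k}) :=
  (((finite_Icc a b).image f).subset (by
    rintro t ⟨k, h1, h2, -, -, rfl⟩
    exact ⟨k, ⟨h1, h2⟩, rfl⟩)).insert c |>.bddAbove

theorem Int.ceil_natCast_div_le_of_le {W c₁ c₂ : ℕ} (h0 : 0 < c₂) (h : c₂ ≤ c₁) :
    ⌈(W : ℝ) / c₁⌉ ≤ ⌈(W : ℝ) / c₂⌉ :=
  Int.ceil_le_ceil (div_le_div_of_nonneg_left (by positivity) (by exact_mod_cast h0)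
    (by exact_mod_cast h))

namespace DPath

variable {P : DPath} {a b k : ℕ} {y y₁ y₂ α : ℝ}

theorem x_strictMonoOn_s13 (P : DPath) : StrictMonoOn P.x (Iic P.n) :=
  strictMonoOn_Iic_of_lt_succ fun m hm => P.hx m hm

theorem x_le_x_s13 {j k : ℕ} (hjk : j ≤ k) (hk : k ≤ P.n) : P.x j ≤ P.x k :=
  P.x_strictMonoOn_s13.monotoneOn (mem_Iic.2 (hjk.trans hk)) hk hjk

theorem lt_of_x_lt_x {j k : ℕ} (hj : j ≤ P.n) (hk : k ≤ P.n) (h : P.x j < P.x k) : j < k :=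
  (P.x_strictMonoOn_s13.lt_iff_lt hj hk).1 h

theorem eventually_forall_x_lt (P : DPath) (y : ℝ) :
    ∀ᶠ y' in 𝓝 y, ∀ m ≤ P.n, P.x m < y → P.x m < y' :=
  (finite_Iic P.n).eventually_all.2 fun _ _ => eventually_imp_distrib_left.2 eventually_gt_nhds

theorem eventually_forall_lt_x (P : DPath) (y : ℝ) :
    ∀ᶠ y' in 𝓝 y, ∀ m ≤ P.n, y < P.x m → y' < P.x m :=
  (finite_Iic P.n).eventually_all.2 fun _ _ => eventually_imp_distrib_left.2 eventually_lt_nhds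

noncomputable def leftTerm (P : DPath) (a b : ℕ) (y : ℝ) (k : ℕ) : ℝ :=
  (y - P.x k) * P.τ + (⌈(P.W a k : ℝ) / (P.cL b y k : ℝ)⌉ : ℝ) - 1

noncomputable def rightTerm (P : DPath) (a b : ℕ) (y : ℝ) (k : ℕ) : ℝ :=
  (P.x k - y) * P.τ + (⌈(P.W k b : ℝ) / (P.cR a y k : ℝ)⌉ : ℝ) - 1

theorem thetaL_nonneg (P : DPath) (a b : ℕ) (y : ℝ) : 0 ≤ ThetaL P a b y :=
  le_csSup (bddAbove_insert_exists_Icc ..) (mem_insert _ _)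

theorem thetaR_nonneg (P : DPath) (a b : ℕ) (y : ℝ) : 0 ≤ ThetaR P a b y :=
  le_csSup (bddAbove_insert_exists_Icc ..) (mem_insert _ _)

theorem leftTerm_le_thetaL (hak : a ≤ k) (hkb : k ≤ b) (hky : P.x k < y) (hW : 1 ≤ P.W a k) :
    P.leftTerm a b y k ≤ ThetaL P a b y :=
  le_csSup (bddAbove_insert_exists_Icc ..) (mem_insert_of_mem _ ⟨k, hak, hkb, hky, hW, rfl⟩)

theorem rightTerm_le_thetaR (hak : a ≤ k) (hkb : k ≤ b) (hyk : y < P.x k) (hW : 1 ≤ P.W k b) :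
    P.rightTerm a b y k ≤ ThetaR P a b y :=
  le_csSup (bddAbove_insert_exists_Icc ..) (mem_insert_of_mem _ ⟨k, hak, hkb, hyk, hW, rfl⟩)

theorem thetaL_le (hα : 0 ≤ α)
    (h : ∀ k, a ≤ k → k ≤ b → P.x k < y → 1 ≤ P.W a k → P.leftTerm a b y k ≤ α) :
    ThetaL P a b y ≤ α :=
  csSup_le (insert_nonempty _ _) <| forall_mem_insert.2
    ⟨hα, by rintro t ⟨k, hak, hkb, hky, hW, rfl⟩; exact h k hak hkb hky hW⟩

theorem thetaR_le (hα : 0 ≤ α)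
    (h : ∀ k, a ≤ k → k ≤ b → y < P.x k → 1 ≤ P.W k b → P.rightTerm a b y k ≤ α) :
    ThetaR P a b y ≤ α :=
  csSup_le (insert_nonempty _ _) <| forall_mem_insert.2
    ⟨hα, by rintro t ⟨k, hak, hkb, hyk, hW, rfl⟩; exact h k hak hkb hyk hW⟩

theorem thetaL_eq_zero_of_le_x (hb : b ≤ P.n) (hy : y ≤ P.x a) : ThetaL P a b y = 0 :=
  le_antisymm (thetaL_le le_rfl fun _ hak hkb hky _ =>
    absurd (hy.trans (x_le_x_s13 hak (hkb.trans hb))) hky.not_ge) (P.thetaL_nonneg a b y)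

theorem one_le_cL (hb : b ≤ P.n) (hkb : k < b) (hky : P.x k < y) : 1 ≤ P.cL b y k :=
  le_csInf ⟨_, mem_image_of_mem _ (⟨le_rfl, hkb, by simpa using hky⟩ :
      k + 1 ∈ {j | k + 1 ≤ j ∧ j ≤ b ∧ P.x (j - 1) < y})⟩
    (forall_mem_image.2 fun j hj => P.hc j (le_add_self.trans hj.1) (hj.2.1.trans hb))

theorem one_le_cR (hk : k ≤ P.n) (hak : a < k) (hyk : y < P.x k) : 1 ≤ P.cR a y k :=
  le_csInf ⟨_, mem_image_of_mem _ (⟨hak, le_rfl, hyk⟩ :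
      k ∈ {j | a + 1 ≤ j ∧ j ≤ k ∧ y < P.x j})⟩
    (forall_mem_image.2 fun j hj => P.hc j (le_add_self.trans hj.1) (hj.2.1.trans hk))

theorem cL_antitone (hkb : k < b) (hky : P.x k < y₁) (h12 : y₁ ≤ y₂) :
    P.cL b y₂ k ≤ P.cL b y₁ k :=
  csInf_le_csInf (OrderBot.bddBelow _) ⟨_, mem_image_of_mem _ (⟨le_rfl, hkb, by simpa using hky⟩ :
      k + 1 ∈ {j | k + 1 ≤ j ∧ j ≤ b ∧ P.x (j - 1) < y₁})⟩
    (image_mono fun _ hj => ⟨hj.1, hj.2.1, hj.2.2.trans_le h12⟩)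

theorem cR_monotone (hak : a < k) (h12 : y₁ ≤ y₂) (hyk : y₂ < P.x k) :
    P.cR a y₁ k ≤ P.cR a y₂ k :=
  csInf_le_csInf (OrderBot.bddBelow _) ⟨_, mem_image_of_mem _ (⟨hak, le_rfl, hyk⟩ :
      k ∈ {j | a + 1 ≤ j ∧ j ≤ k ∧ y₂ < P.x j})⟩
    (image_mono fun _ hj => ⟨hj.1, hj.2.1, h12.trans_lt hj.2.2⟩)

theorem leftTerm_mono (hb : b ≤ P.n) (hkb : k < b) (hky : P.x k < y₁) (h12 : y₁ ≤ y₂) :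
    P.leftTerm a b y₁ k ≤ P.leftTerm a b y₂ k := by
  have := Int.ceil_natCast_div_le_of_le (W := P.W a k)
    (one_le_cL hb hkb (hky.trans_le h12)) (cL_antitone hkb hky h12)
  unfold leftTerm
  gcongr
  exact P.hτ.le

theorem rightTerm_anti (hk : k ≤ P.n) (hak : a < k) (h12 : y₁ ≤ y₂) (hyk : y₂ < P.x k) :
    P.rightTerm a b y₂ k ≤ P.rightTerm a b y₁ k := by
  have := Int.ceil_natCast_div_le_of_le (W := P.W k b)
    (one_le_cR hk hak (h12.trans_lt hyk)) (cR_monotone hak h12 hyk)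
  unfold rightTerm
  gcongr
  exact P.hτ.le

theorem thetaL_mono (hb : b ≤ P.n) (hy₁ : y₁ ≤ P.x b) (h12 : y₁ ≤ y₂) :
    ThetaL P a b y₁ ≤ ThetaL P a b y₂ :=
  thetaL_le (P.thetaL_nonneg ..) fun _ hak hkb hky hW =>
    (leftTerm_mono hb (lt_of_x_lt_x (hkb.trans hb) hb (hky.trans_le hy₁)) hky h12).trans
      (leftTerm_le_thetaL hak hkb (hky.trans_le h12) hW)

theorem thetaR_anti (hb : b ≤ P.n) (hy₁ : P.x a ≤ y₁) (h12 : y₁ ≤ y₂) :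
    ThetaR P a b y₂ ≤ ThetaR P a b y₁ :=
  thetaR_le (P.thetaR_nonneg ..) fun _ hak hkb hyk hW =>
    (rightTerm_anti (hkb.trans hb)
      (lt_of_x_lt_x (hak.trans (hkb.trans hb)) (hkb.trans hb) ((hy₁.trans h12).trans_lt hyk))
      h12 hyk).trans
      (rightTerm_le_thetaR hak hkb (h12.trans_lt hyk) hW)

theorem cL_congr (hb : b ≤ P.n) (h : ∀ m ≤ P.n, P.x m < y₁ ↔ P.x m < y₂) :
    P.cL b y₁ k = P.cL b y₂ k := by
  have : {j | k + 1 ≤ j ∧ j ≤ b ∧ P.x (j - 1) < y₁} =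
      {j | k + 1 ≤ j ∧ j ≤ b ∧ P.x (j - 1) < y₂} := by
    ext j
    exact and_congr_right fun _ => and_congr_right fun hj =>
      h _ ((Nat.sub_le j 1).trans (hj.trans hb))
  unfold cL
  rw [this]

theorem cR_congr (hk : k ≤ P.n) (h : ∀ m ≤ P.n, y₁ < P.x m ↔ y₂ < P.x m) :
    P.cR a y₁ k = P.cR a y₂ k := by
  have : {j | a + 1 ≤ j ∧ j ≤ k ∧ y₁ < P.x j} = {j | a + 1 ≤ j ∧ j ≤ k ∧ y₂ < P.x j} := by
    ext j
    exact and_congr_right fun _ => and_congr_right fun hj => h _ (hj.trans hk)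
  unfold cR
  rw [this]

theorem thetaL_le_thetaL_add (hb : b ≤ P.n) (h12 : y₁ ≤ y₂)
    (h : ∀ m ≤ P.n, P.x m < y₁ ↔ P.x m < y₂) :
    ThetaL P a b y₂ ≤ ThetaL P a b y₁ + (y₂ - y₁) * P.τ := by
  refine thetaL_le (add_nonneg (P.thetaL_nonneg ..) (mul_nonneg (sub_nonneg.2 h12) P.hτ.le))
    fun k hak hkb hky hW => ?_
  have hterm : P.leftTerm a b y₂ k = P.leftTerm a b y₁ k + (y₂ - y₁) * P.τ := by
    rw [leftTerm, leftTerm, cL_congr hb h]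
    ring
  rw [hterm]
  gcongr
  exact leftTerm_le_thetaL hak hkb ((h k (hkb.trans hb)).2 hky) hW

theorem thetaR_le_thetaR_add (hb : b ≤ P.n) (h12 : y₁ ≤ y₂)
    (h : ∀ m ≤ P.n, y₁ < P.x m ↔ y₂ < P.x m) :
    ThetaR P a b y₁ ≤ ThetaR P a b y₂ + (y₂ - y₁) * P.τ := by
  refine thetaR_le (add_nonneg (P.thetaR_nonneg ..) (mul_nonneg (sub_nonneg.2 h12) P.hτ.le))
    fun k hak hkb hyk hW => ?_
  have hterm : P.rightTerm a b y₁ k = P.rightTerm a b y₂ k + (y₂ - y₁) * P.τ := by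
    rw [rightTerm, rightTerm, cR_congr (hkb.trans hb) h]
    ring
  rw [hterm]
  gcongr
  exact rightTerm_le_thetaR hak hkb ((h k (hkb.trans hb)).1 hyk) hW

theorem lowerSemicontinuousOn_thetaL (hb : b ≤ P.n) :
    LowerSemicontinuousOn (ThetaL P a b) (Iic (P.x b)) := fun y hy => by
  refine lowerSemicontinuousWithinAt_of_eventually_sub_mul_dist_le (C := P.τ) ?_
  filter_upwards [self_mem_nhdsWithin, nhdsWithin_le_nhds (P.eventually_forall_x_lt y)]
    with y' hy' hgap
  have hdist : 0 ≤ P.τ * dist y' y := mul_nonneg P.hτ.le dist_nonneg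
  rcases le_total y y' with h | h
  · linarith [thetaL_mono (a := a) hb hy h]
  · have := thetaL_le_thetaL_add (a := a) hb h fun m hm => ⟨fun h' => h'.trans_le h, hgap m hm⟩
    rw [Real.dist_eq, abs_of_nonpos (sub_nonpos.2 h)]
    linarith

theorem lowerSemicontinuousOn_thetaR (hb : b ≤ P.n) :
    LowerSemicontinuousOn (ThetaR P a b) (Ici (P.x a)) := fun y hy => by
  refine lowerSemicontinuousWithinAt_of_eventually_sub_mul_dist_le (C := P.τ) ?_
  filter_upwards [self_mem_nhdsWithin, nhdsWithin_le_nhds (P.eventually_forall_lt_x y)]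
    with y' hy' hgap
  have hdist : 0 ≤ P.τ * dist y' y := mul_nonneg P.hτ.le dist_nonneg
  rcases le_total y y' with h | h
  · have := thetaR_le_thetaR_add (a := a) hb h fun m hm => ⟨hgap m hm, fun h' => h.trans_lt h'⟩
    rw [Real.dist_eq, abs_of_nonneg (sub_nonneg.2 h)]
    linarith
  · linarith [thetaR_anti (b := b) hb hy' h]

theorem lowerSemicontinuousOn_theta (hb : b ≤ P.n) :
    LowerSemicontinuousOn (Theta P a b) (Icc (P.x a) (P.x b)) :=
  ((lowerSemicontinuousOn_thetaL hb).mono Icc_subset_Iic_self).sup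
    ((lowerSemicontinuousOn_thetaR hb).mono Icc_subset_Ici_self)

theorem isLeast_theta1 (hab : a ≤ b) (hb : b ≤ P.n) :
    IsLeast (Theta P a b '' Icc (P.x a) (P.x b)) (Theta1 P a b) := by
  obtain ⟨y, hy, hmin⟩ := (lowerSemicontinuousOn_theta hb).exists_isMinOn
    (nonempty_Icc.2 (x_le_x_s13 hab hb)) isCompact_Icc
  have h : IsLeast (Theta P a b '' Icc (P.x a) (P.x b)) (Theta P a b y) :=
    ⟨mem_image_of_mem _ hy, forall_mem_image.2 hmin⟩
  rwa [Theta1, h.csInf_eq]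

theorem cL_eq_of_le_x {b' : ℕ} (hbb' : b ≤ b') (hb' : b' ≤ P.n) (hy : y ≤ P.x b) :
    P.cL b' y k = P.cL b y k := by
  have : {j | k + 1 ≤ j ∧ j ≤ b' ∧ P.x (j - 1) < y} =
      {j | k + 1 ≤ j ∧ j ≤ b ∧ P.x (j - 1) < y} := by
    ext j
    refine and_congr_right fun _ =>
      ⟨fun ⟨hj, hjy⟩ => ⟨?_, hjy⟩, fun ⟨hj, hjy⟩ => ⟨hj.trans hbb', hjy⟩⟩
    have := lt_of_x_lt_x (by omega) (hbb'.trans hb') (hjy.trans_le hy)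
    omega
  unfold cL
  rw [this]

theorem thetaL_eq_of_le_x {b' : ℕ} (hbb' : b ≤ b') (hb' : b' ≤ P.n) (hy : y ≤ P.x b) :
    ThetaL P a b' y = ThetaL P a b y :=
  le_antisymm
    (thetaL_le (P.thetaL_nonneg ..) fun k hak hkb' hky hW => by
      rw [leftTerm, cL_eq_of_le_x hbb' hb' hy]
      exact leftTerm_le_thetaL hak
        (lt_of_x_lt_x (hkb'.trans hb') (hbb'.trans hb') (hky.trans_le hy)).le hky hW)
    (thetaL_le (P.thetaL_nonneg ..) fun k hak hkb hky hW => by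
      have := leftTerm_le_thetaL (b := b') hak (hkb.trans hbb') hky hW
      rwa [leftTerm, cL_eq_of_le_x hbb' hb' hy] at this)

end DPath

open DPath

/-- the set `{ x ∈ [x_i, x_n] : Θ_L(P_{i,n},x) ≤ α }` contains
`x_i` and has a maximum `x*`; if `J = { j : i ≤ j ≤ n, x* ≤ x_j,
Θ_R(P_{i,j},x*) ≤ α }` is nonempty with maximum `j*`, then
`j* = max { j : i ≤ j ≤ n, Θ¹(P_{i,j}) ≤ α }` and `Θ(P_{i,j*},x*) ≤ α`. -/
theorem stmt13 (P : DPath) (α : ℝ) (hα : 0 ≤ α) (i : ℕ) (hi : i ≤ P.n) :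
    -- the set contains x_i
    (P.x i ∈ Set.Icc (P.x i) (P.x P.n) ∧ ThetaL P i P.n (P.x i) ≤ α) ∧
    -- and has a maximum element
    (∃ xs, (xs ∈ Set.Icc (P.x i) (P.x P.n) ∧ ThetaL P i P.n xs ≤ α) ∧
      ∀ y ∈ Set.Icc (P.x i) (P.x P.n), ThetaL P i P.n y ≤ α → y ≤ xs) ∧
    -- for x* this maximum and j* = max J (J assumed nonempty):
    (∀ xs, (xs ∈ Set.Icc (P.x i) (P.x P.n) ∧ ThetaL P i P.n xs ≤ α) →
      (∀ y ∈ Set.Icc (P.x i) (P.x P.n), ThetaL P i P.n y ≤ α → y ≤ xs) →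
      ∀ js, (i ≤ js ∧ js ≤ P.n ∧ xs ≤ P.x js ∧ ThetaR P i js xs ≤ α) →
        (∀ j, i ≤ j → j ≤ P.n → xs ≤ P.x j → ThetaR P i j xs ≤ α → j ≤ js) →
        ((i ≤ js ∧ js ≤ P.n ∧ Theta1 P i js ≤ α) ∧
         (∀ j, i ≤ j → j ≤ P.n → Theta1 P i j ≤ α → j ≤ js) ∧
         Theta P i js xs ≤ α)) := by
  have hxi : P.x i ∈ Icc (P.x i) (P.x P.n) ∧ ThetaL P i P.n (P.x i) ≤ α :=
    ⟨⟨le_rfl, x_le_x_s13 hi le_rfl⟩, (thetaL_eq_zero_of_le_x le_rfl le_rfl).trans_le hα⟩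
  refine ⟨hxi, ?_, ?_⟩
  · have hcompact : IsCompact (Icc (P.x i) (P.x P.n) ∩ ThetaL P i P.n ⁻¹' Iic α) :=
      ((lowerSemicontinuousOn_thetaL le_rfl).mono Icc_subset_Iic_self)
        |>.isCompact_inter_preimage_Iic isCompact_Icc α
    obtain ⟨xs, hxs, hmax⟩ := hcompact.exists_isGreatest ⟨_, hxi⟩
    exact ⟨xs, hxs, fun y hy hyα => hmax ⟨hy, hyα⟩⟩
  rintro xs ⟨⟨hixs, -⟩, hxsα⟩ hmax js ⟨hijs, hjsn, hxsjs, hRα⟩ hjmax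
  have hΘ : Theta P i js xs ≤ α :=
    max_le ((thetaL_eq_of_le_x hjsn le_rfl hxsjs).symm.trans_le hxsα) hRα
  have hΘ1 : Theta1 P i js ≤ α :=
    ((isLeast_theta1 hijs hjsn).2 ⟨xs, ⟨hixs, hxsjs⟩, rfl⟩).trans hΘ
  refine ⟨⟨hijs, hjsn, hΘ1⟩, ?_, hΘ⟩
  intro j hij hjn hj1
  by_contra! hjsj
  obtain ⟨y, hy, hyj⟩ := (isLeast_theta1 hij hjn).1
  have hΘy : Theta P i j y ≤ α := hyj ▸ hj1
  have hyxs : y ≤ xs := hmax y ⟨hy.1, hy.2.trans (x_le_x_s13 hjn le_rfl)⟩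
    ((thetaL_eq_of_le_x hjn le_rfl hy.2).trans_le ((le_max_left _ _).trans hΘy))
  exact hjsj.not_ge <| hjmax j hij hjn (hxsjs.trans (x_le_x_s13 hjsj.le hjn))
    ((thetaR_anti hjn hy.1 hyxs).trans ((le_max_right _ _).trans hΘy))
end
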